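/- The diagonal embedding K^{M_{p×q}} → K^{M_{pq×pq}} (sending A to the function supported on 'diagonal' word pairs in the product alphabet) preserves complexity; consequently Rec_{p×q}(K) is a commutative ring under the pointwise product AB[U,W] = A[U,W]·B[U,W]. -/

import Mathlib

/-- The free monoid `M_{p×q}` of pairs of equal-length words. -/
def EqPair (p q : ℕ) : Type :=
  {x : List (Fin p) × List (Fin q) // x.1.length = x.2.length}

/-- The single-letter shift operator `ρ(s,t)`: `(ρ(s,t)A)[U,W] = A[Us,Wt]`. -/
def shiftL (p q : ℕ) (K : Type*) [Field K] (s : Fin p) (t : Fin q) :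
    (EqPair p q → K) →ₗ[K] (EqPair p q → K) where
  toFun A := fun x => A ⟨(x.1.1 ++ [s], x.1.2 ++ [t]), by simp [x.2]⟩
  map_add' _ _ := rfl
  map_smul' _ _ := rfl

/-- A subspace of `K^{M_{p×q}}` is recursively closed if it is stable under
all shift operators. -/
def RecClosed (p q : ℕ) (K : Type*) [Field K]
    (V : Submodule K (EqPair p q → K)) : Prop :=
  ∀ (s : Fin p) (t : Fin q), ∀ A ∈ V, shiftL p q K s t A ∈ V

/-- The recursive closure of `A`: the smallest recursively closed subspace
containing `A`. -/
def recClosure (p q : ℕ) (K : Type*) [Field K] (A : EqPair p q → K) :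
    Submodule K (EqPair p q → K) :=
  sInf {V | A ∈ V ∧ RecClosed p q K V}

/-- `A` is a recurrence matrix if its recursive closure is
finite-dimensional. -/
def IsRecMatrix (p q : ℕ) (K : Type*) [Field K] (A : EqPair p q → K) : Prop :=
  FiniteDimensional K (recClosure p q K A)

/-- The matrix product `(A·B)[U,W] = ∑_V A[U,V] B[V,W]`. -/
def matMul {p r q : ℕ} {K : Type*} [Field K]
    (A : EqPair p r → K) (B : EqPair r q → K) : EqPair p q → K :=
  fun x => ∑ V : Fin x.1.1.length → Fin r,
    A ⟨(x.1.1, List.ofFn V), by simp⟩ * B ⟨(List.ofFn V, x.1.2), by simp [x.2]⟩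

/-- The diagonal embedding `K^{M_{p×q}} → K^{M_{pq×pq}}`: identify letters of
the alphabet of size `pq` with pairs via `finProdFinEquiv`, and send `A` to
the function supported on diagonal word pairs `(C, C)`, with value
`A[U, W]` where `C` is the letterwise pairing of `U` and `W`. -/
def diagEmb (p q : ℕ) (K : Type*) [Field K] (A : EqPair p q → K) :
    EqPair (p * q) (p * q) → K :=
  fun y =>
    if y.1.1 = y.1.2 then
      A ⟨(y.1.1.map fun c => (finProdFinEquiv.symm c).1,
          y.1.1.map fun c => (finProdFinEquiv.symm c).2), by simp⟩
    else 0

/-!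
The shifts of `diagEmb A` along a diagonal letter `(s,t)` are the embeddings of the shifts
`ρ(s,t) A`, and all off-diagonal shifts vanish. Hence the recursive closure of `diagEmb A` is
the image of that of `A` under the injective linear map `diagEmb`, and the two have the same
dimension. For the Hadamard product, `ρ(s,t)` is multiplicative, so the product `V * W` of two
recursively closed subspaces is recursively closed; thus the closure of `A * B` lies in the
product of the closures of `A` and `B`, which is finite-dimensional when both are.
-/

section RecClosure

variable {p q : ℕ} {K : Type*} [Field K]

theorem mem_recClosure_self (A : EqPair p q → K) : A ∈ recClosure p q K A :=
  Submodule.mem_sInf.2 fun _ hV => hV.1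

theorem recClosed_recClosure (A : EqPair p q → K) :
    RecClosed p q K (recClosure p q K A) :=
  fun s t B hB => Submodule.mem_sInf.2 fun V hV => hV.2 s t B (Submodule.mem_sInf.1 hB V hV)

theorem recClosure_le {A : EqPair p q → K} {V : Submodule K (EqPair p q → K)}
    (hA : A ∈ V) (hV : RecClosed p q K V) : recClosure p q K A ≤ V :=
  sInf_le ⟨hA, hV⟩

theorem shiftL_mul (s : Fin p) (t : Fin q) (A B : EqPair p q → K) :
    shiftL p q K s t (A * B) = shiftL p q K s t A * shiftL p q K s t B :=
  rfl

theorem RecClosed.mul {V W : Submodule K (EqPair p q → K)}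
    (hV : RecClosed p q K V) (hW : RecClosed p q K W) : RecClosed p q K (V * W) := by
  intro s t C hC
  suffices V * W ≤ (V * W).comap (shiftL p q K s t) from this hC
  refine Submodule.mul_le.2 fun A hA B hB => ?_
  rw [Submodule.mem_comap, shiftL_mul]
  exact Submodule.mul_mem_mul (hV s t A hA) (hW s t B hB)

theorem recClosure_mul_le (A B : EqPair p q → K) :
    recClosure p q K (A * B) ≤ recClosure p q K A * recClosure p q K B :=
  recClosure_le (Submodule.mul_mem_mul (mem_recClosure_self A) (mem_recClosure_self B))
    ((recClosed_recClosure A).mul (recClosed_recClosure B))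

theorem IsRecMatrix.mul {A B : EqPair p q → K} (hA : IsRecMatrix p q K A)
    (hB : IsRecMatrix p q K B) : IsRecMatrix p q K (A * B) := by
  have hAB : FiniteDimensional K ↥(recClosure p q K A * recClosure p q K B) :=
    Module.Finite.iff_fg.2 ((Module.Finite.iff_fg.1 hA).mul (Module.Finite.iff_fg.1 hB))
  exact Submodule.finiteDimensional_of_le (recClosure_mul_le A B)

end RecClosure

section DiagEmb

variable {p q : ℕ} {K : Type*} [Field K]

def EqPair.zipWord (x : EqPair p q) : List (Fin (p * q)) :=
  (x.1.1.zip x.1.2).map finProdFinEquiv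

theorem EqPair.zipWord_map_fst (x : EqPair p q) :
    x.zipWord.map (fun c => (finProdFinEquiv.symm c).1) = x.1.1 := by
  simpa [EqPair.zipWord, Function.comp_def, -finProdFinEquiv_symm_apply]
    using List.map_fst_zip x.2.le

theorem EqPair.zipWord_map_snd (x : EqPair p q) :
    x.zipWord.map (fun c => (finProdFinEquiv.symm c).2) = x.1.2 := by
  simpa [EqPair.zipWord, Function.comp_def, -finProdFinEquiv_symm_apply]
    using List.map_snd_zip x.2.ge

theorem diagEmb_zipWord (A : EqPair p q → K) (x : EqPair p q) :
    diagEmb p q K A ⟨(x.zipWord, x.zipWord), rfl⟩ = A x := by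
  unfold diagEmb
  rw [if_pos rfl]
  exact congrArg A (Subtype.ext (Prod.ext x.zipWord_map_fst x.zipWord_map_snd))

variable (p q K) in
def diagEmbLinearMap : (EqPair p q → K) →ₗ[K] (EqPair (p * q) (p * q) → K) where
  toFun := diagEmb p q K
  map_add' A B := funext fun y => by
    simp only [diagEmb, Pi.add_apply]
    split_ifs
    · rfl
    · exact (add_zero 0).symm
  map_smul' c A := funext fun y => by
    simp only [diagEmb, Pi.smul_apply, RingHom.id_apply]
    split_ifs
    · rfl
    · exact (smul_zero c).symm

theorem diagEmbLinearMap_injective : Function.Injective (diagEmbLinearMap p q K) :=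
  fun A B h => funext fun x => by
    rw [← diagEmb_zipWord A x, ← diagEmb_zipWord B x]
    exact congrFun h _

theorem shiftL_diagEmb_diag (A : EqPair p q → K) (s : Fin p) (t : Fin q) :
    shiftL (p * q) (p * q) K (finProdFinEquiv (s, t)) (finProdFinEquiv (s, t))
        (diagEmb p q K A) = diagEmb p q K (shiftL p q K s t A) := by
  funext y
  change (if y.1.1 ++ [finProdFinEquiv (s, t)] = y.1.2 ++ [finProdFinEquiv (s, t)]
      then _ else (0 : K)) = diagEmb p q K _ y
  rw [diagEmb]
  by_cases h : y.1.1 = y.1.2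
  · rw [if_pos (by rw [h]), if_pos h]
    exact congrArg A (Subtype.ext (Prod.ext (by simp [-finProdFinEquiv_symm_apply])
      (by simp [-finProdFinEquiv_symm_apply])))
  · rw [if_neg (by simpa using h), if_neg h]

theorem shiftL_diagEmb_of_ne (A : EqPair p q → K) {c c' : Fin (p * q)} (h : c ≠ c') :
    shiftL (p * q) (p * q) K c c' (diagEmb p q K A) = 0 := by
  funext y
  change (if y.1.1 ++ [c] = y.1.2 ++ [c'] then _ else (0 : K)) = 0
  rw [if_neg]
  intro hy
  exact h (by simpa using (List.append_inj' hy rfl).2)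

theorem recClosure_diagEmb (A : EqPair p q → K) :
    recClosure (p * q) (p * q) K (diagEmb p q K A) =
      (recClosure p q K A).map (diagEmbLinearMap p q K) := by
  apply le_antisymm
  · refine recClosure_le ⟨A, mem_recClosure_self A, rfl⟩ ?_
    rintro c c' _ ⟨B, hB, rfl⟩
    by_cases h : c = c'
    · subst h
      obtain ⟨⟨s, t⟩, rfl⟩ := finProdFinEquiv.surjective c
      exact ⟨shiftL p q K s t B, recClosed_recClosure A s t B hB, (shiftL_diagEmb_diag B s t).symm⟩
    · change shiftL (p * q) (p * q) K c c' (diagEmb p q K B) ∈ _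
      rw [shiftL_diagEmb_of_ne B h]
      exact Submodule.zero_mem _
  · refine Submodule.map_le_iff_le_comap.2 (recClosure_le (mem_recClosure_self _) ?_)
    intro s t B hB
    rw [Submodule.mem_comap] at hB ⊢
    change diagEmb p q K _ ∈ _
    rw [← shiftL_diagEmb_diag]
    exact recClosed_recClosure _ _ _ _ hB

theorem rank_recClosure_diagEmb (A : EqPair p q → K) :
    Module.rank K (recClosure (p * q) (p * q) K (diagEmb p q K A)) =
      Module.rank K (recClosure p q K A) := by
  rw [recClosure_diagEmb]
  exact (Submodule.equivMapOfInjective _ diagEmbLinearMap_injective _).rank_eq.symm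

end DiagEmb

/-- The diagonal embedding preserves complexity; consequently the recurrence
matrices form a commutative ring under the pointwise (Hadamard) product. -/
theorem diagEmb_preserves_complexity (p q : ℕ) (K : Type*) [Field K] :
    (∀ A : EqPair p q → K,
      Module.rank K (recClosure (p * q) (p * q) K (diagEmb p q K A)) =
        Module.rank K (recClosure p q K A)) ∧
    (∀ A B : EqPair p q → K, IsRecMatrix p q K A → IsRecMatrix p q K B →
      IsRecMatrix p q K (fun x => A x * B x)) ∧
    (∀ A B : EqPair p q → K, (fun x => A x * B x) = (fun x => B x * A x)) :=
  ⟨rank_recClosure_diagEmb, fun _ _ hA hB => hA.mul hB, fun A B => mul_comm A B⟩
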